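/- arXiv:1909.01288 — 2 statements merged into one kernel-verified Lean document; each statement's English description precedes it below -/
import Mathlib

section
/- For a linear time-invariant system dx/dt = A x + B u with A an N×N real matrix and B an N×M real matrix, if the Kalman controllability matrix C = (B, AB, A²B, …, A^{N-1}B) has rank N, then for every eigenvalue λ of A (over ℂ) the matrix (λI - A, B) (the N×(N+M) block matrix) also has rank N. -/
/-!
If `w` is a left null vector of `(λI - A, B)`, then `w A = λ w` and `w B = 0`, hence
`w A^j B = λ^j w B = 0` for every `j`: `w` is a left null vector of the Kalman matrix. The Kalman
matrix has full row rank over `ℝ`, hence also over `ℂ` (apply this to the real and imaginary parts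
of a complex null vector), so `w = 0`.
-/

open Matrix

namespace Matrix

variable {m n : Type*} [Fintype m]

theorem rank_eq_card_iff_vecMul_eq_zero {F : Type*} [Field F] [Fintype n] (M : Matrix m n F) :
    M.rank = Fintype.card m ↔ ∀ v : m → F, v ᵥ* M = 0 → v = 0 := by
  rw [M.rank_eq_finrank_span_row, eq_comm, ← Set.finrank,
    ← linearIndependent_iff_card_eq_finrank_span, ← vecMul_injective_iff, ← coe_vecMulLinear,
    injective_iff_map_eq_zero]
  rfl

theorem re_vecMul_map_ofReal (w : m → ℂ) (K : Matrix m n ℝ) (j : n) :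
    ((w ᵥ* K.map Complex.ofReal) j).re = ((fun i => (w i).re) ᵥ* K) j := by
  simp [vecMul, dotProduct, Complex.re_sum]

theorem im_vecMul_map_ofReal (w : m → ℂ) (K : Matrix m n ℝ) (j : n) :
    ((w ᵥ* K.map Complex.ofReal) j).im = ((fun i => (w i).im) ᵥ* K) j := by
  simp [vecMul, dotProduct, Complex.im_sum]

theorem rank_map_ofReal_of_rank_eq_card [Fintype n] {K : Matrix m n ℝ}
    (hK : K.rank = Fintype.card m) :
    (K.map Complex.ofReal).rank = Fintype.card m := by
  rw [rank_eq_card_iff_vecMul_eq_zero] at hK ⊢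
  intro w hw
  have hre := hK _ (funext fun j => by rw [← re_vecMul_map_ofReal, hw]; rfl)
  have him := hK _ (funext fun j => by rw [← im_vecMul_map_ofReal, hw]; rfl)
  exact funext fun i => Complex.ext (congrFun hre i) (congrFun him i)

end Matrix

section Controllability

variable {R : Type*} [CommRing R] {n m : Type*} [Fintype n] [DecidableEq n]

/-- The Kalman matrix `(B, AB, …, A^(k-1) B)`. -/
def controllabilityMatrix (k : ℕ) (A : Matrix n n R) (B : Matrix n m R) :
    Matrix n (Fin k × m) R :=
  of fun i p => (A ^ (p.1 : ℕ) * B) i p.2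

theorem controllabilityMatrix_map {S : Type*} [CommRing S] (f : R →+* S) (k : ℕ)
    (A : Matrix n n R) (B : Matrix n m R) :
    (controllabilityMatrix k A B).map f = controllabilityMatrix k (A.map f) (B.map f) := by
  ext i p
  rw [map_apply, controllabilityMatrix, of_apply, RingHom.map_matrix_mul, Matrix.map_pow]
  rfl

theorem vecMul_pow_mul_eq_zero {A : Matrix n n R} {B : Matrix n m R} {w : n → R} {lam : R}
    (hA : w ᵥ* A = lam • w) (hB : w ᵥ* B = 0) (j : ℕ) : w ᵥ* (A ^ j * B) = 0 := by
  have hpow : w ᵥ* A ^ j = lam ^ j • w := by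
    induction j with
    | zero => simp
    | succ j ih => rw [pow_succ, ← vecMul_vecMul, ih, smul_vecMul, hA, smul_smul, pow_succ]
  rw [← vecMul_vecMul, hpow, smul_vecMul, hB, smul_zero]

theorem vecMul_controllabilityMatrix_eq_zero {k : ℕ} {A : Matrix n n R} {B : Matrix n m R}
    {w : n → R} (h : ∀ j : ℕ, w ᵥ* (A ^ j * B) = 0) : w ᵥ* controllabilityMatrix k A B = 0 :=
  funext fun p => congrFun (h p.1) p.2

theorem rank_fromCols_smul_one_sub_eq_card {F : Type*} [Field F] [Fintype m] {k : ℕ}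
    {A : Matrix n n F} {B : Matrix n m F}
    (hKalman : (controllabilityMatrix k A B).rank = Fintype.card n) (lam : F) :
    (fromCols (lam • (1 : Matrix n n F) - A) B).rank = Fintype.card n := by
  rw [rank_eq_card_iff_vecMul_eq_zero] at hKalman ⊢
  intro w hw
  rw [vecMul_fromCols, ← Sum.elim_zero_zero, Sum.elim_eq_iff] at hw
  have hA : w ᵥ* A = lam • w := by
    rw [vecMul_sub, vecMul_smul, vecMul_one, sub_eq_zero] at hw
    exact hw.1.symm
  exact hKalman w (vecMul_controllabilityMatrix_eq_zero (vecMul_pow_mul_eq_zero hA hw.2))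

end Controllability

theorem kalman_implies_PBH_general (N M : ℕ)
    (A : Matrix (Fin N) (Fin N) ℝ) (B : Matrix (Fin N) (Fin M) ℝ)
    (hKalman :
      (Matrix.of fun i (p : Fin N × Fin M) =>
        ((A ^ (p.1 : ℕ)) * B) i p.2 : Matrix (Fin N) (Fin N × Fin M) ℝ).rank = N)
    (lam : ℂ) :
    (Matrix.fromCols (lam • (1 : Matrix (Fin N) (Fin N) ℂ) - A.map Complex.ofReal)
      (B.map Complex.ofReal)).rank = N := by
  have hReal : (controllabilityMatrix N A B).rank = Fintype.card (Fin N) :=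
    hKalman.trans (Fintype.card_fin N).symm
  have hComplex : (controllabilityMatrix N (A.map Complex.ofRealHom)
      (B.map Complex.ofRealHom)).rank = Fintype.card (Fin N) := by
    rw [← controllabilityMatrix_map]
    exact rank_map_ofReal_of_rank_eq_card hReal
  exact (rank_fromCols_smul_one_sub_eq_card hComplex lam).trans (Fintype.card_fin N)

/-- Kalman rank condition implies the PBH rank condition at every eigenvalue. -/
theorem kalman_implies_PBH (N M : ℕ)
    (A : Matrix (Fin N) (Fin N) ℝ) (B : Matrix (Fin N) (Fin M) ℝ)
    (hKalman :
      (Matrix.of fun i (p : Fin N × Fin M) =>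
        ((A ^ (p.1 : ℕ)) * B) i p.2 : Matrix (Fin N) (Fin N × Fin M) ℝ).rank = N)
    (lam : ℂ)
    (hEig : ∃ v : Fin N → ℂ, v ≠ 0 ∧
      (A.map (Complex.ofReal)).mulVec v = lam • v) :
    (Matrix.fromCols (lam • (1 : Matrix (Fin N) (Fin N) ℂ) - A.map Complex.ofReal)
      (B.map Complex.ofReal)).rank = N :=
  kalman_implies_PBH_general N M A B hKalman lam
end

section
/- Let A be an N×N complex matrix and λ an eigenvalue of A with geometric multiplicity μ. If B is an N×M matrix such that the block matrix (λI - A, B) has rank N, then rank(B) ≥ μ, i.e., M ≥ μ. -/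
/-!
Every column of `(λI - A, B)` lies in the column space of `λI - A` or of `B`, so
`N = rank (λI - A, B) ≤ rank (λI - A) + rank B`, that is, `μ = N - rank (λI - A) ≤ rank B ≤ M`.
-/

namespace Matrix

variable {m n₁ n₂ R : Type*}

theorem col_fromCols (A : Matrix m n₁ R) (B : Matrix m n₂ R) :
    (fromCols A B).col = Sum.elim A.col B.col := by
  ext (j | j) i <;> rfl

variable [Fintype n₁] [Fintype n₂]

theorem range_mulVecLin_fromCols [CommSemiring R] (A : Matrix m n₁ R) (B : Matrix m n₂ R) :
    LinearMap.range (fromCols A B).mulVecLin =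
      LinearMap.range A.mulVecLin ⊔ LinearMap.range B.mulVecLin := by
  simp only [range_mulVecLin, col_fromCols, Set.Sum.elim_range, Submodule.span_union]

theorem rank_fromCols_le {K : Type*} [Field K] [Fintype m] (A : Matrix m n₁ K)
    (B : Matrix m n₂ K) : (fromCols A B).rank ≤ A.rank + B.rank := by
  rw [rank, range_mulVecLin_fromCols]
  exact Submodule.finrank_add_le_finrank_add_finrank _ _

end Matrix

theorem pbh_rank_lower_bound_general (N M μ : ℕ)
    (A : Matrix (Fin N) (Fin N) ℂ) (lam : ℂ)
    (hμ : μ = N - (lam • (1 : Matrix (Fin N) (Fin N) ℂ) - A).rank)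
    (B : Matrix (Fin N) (Fin M) ℂ)
    (hPBH : (Matrix.fromCols (lam • (1 : Matrix (Fin N) (Fin N) ℂ) - A) B).rank = N) :
    μ ≤ B.rank ∧ μ ≤ M := by
  have hsum := Matrix.rank_fromCols_le (lam • (1 : Matrix (Fin N) (Fin N) ℂ) - A) B
  have hB : μ ≤ B.rank := by omega
  exact ⟨hB, hB.trans B.rank_le_width⟩

/-- If the PBH block matrix `(lam • I - A, B)` has full rank `N`, then the number of
control inputs (and the rank of `B`) is at least the geometric multiplicity of `lam`. -/
theorem pbh_rank_lower_bound (N M μ : ℕ)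
    (A : Matrix (Fin N) (Fin N) ℂ) (lam : ℂ)
    (hEig : ∃ v : Fin N → ℂ, v ≠ 0 ∧ A.mulVec v = lam • v)
    (hμ : μ = N - (lam • (1 : Matrix (Fin N) (Fin N) ℂ) - A).rank)
    (B : Matrix (Fin N) (Fin M) ℂ)
    (hPBH : (Matrix.fromCols (lam • (1 : Matrix (Fin N) (Fin N) ℂ) - A) B).rank = N) :
    μ ≤ B.rank ∧ μ ≤ M :=
  pbh_rank_lower_bound_general N M μ A lam hμ B hPBH
end
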